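/- Under the setting above (Γ ≻ 0, Σ ⪰ 0 commuting), the gradient of ℓ satisfies ‖∇ℓ(U,u)‖² ≥ u² ‖(u U − Γ^{-1}Σ) Γ‖_F², and moreover ℓ(U,u) − min ℓ ≤ (1/2) ‖Γ^{1/2}‖_F² ‖Γ^{-1}‖_F² ‖(u U − Γ^{-1}Σ) Γ‖_F². Consequently, if u² ≥ c > 0, then ℓ satisfies the Polyak–Łojasiewicz inequality ‖∇ℓ(U,u)‖² ≥ μ (ℓ(U,u) − min ℓ) with μ = 2c / (‖Γ^{1/2}‖_F² ‖Γ^{-1}‖_F²). -/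

import Mathlib

/-!
With `R = (uU - Γ⁻¹Σ)Γ`, commutativity gives `R = uUΓ - Σ`, so the `U`-component of the
gradient is exactly `u • R`. Completing the square, `ℓ - min ℓ = ½ tr(Γ A Aᵀ) = ½‖Γ^{1/2} A‖_F²`
for `A = uU - Γ⁻¹Σ`, and writing `A = R Γ⁻¹` submultiplicativity bounds this by
`½‖Γ^{1/2}‖_F²‖Γ⁻¹‖_F²‖R‖_F²`. Chaining the two bounds with `c ≤ u²` gives the PL inequality.
-/

open Matrix
open scoped Matrix

/-- Frobenius norm of a real square matrix. -/
noncomputable def frobNorm {d : ℕ} (A : Matrix (Fin d) (Fin d) ℝ) : ℝ :=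
  Real.sqrt (∑ i, ∑ j, (A i j)^2)

open scoped ComplexOrder in
/-- The square root of a positive semidefinite matrix, as `Matrix.PosSemidef.sqrt` was defined
in Mathlib of December 2024 (removed since). -/
noncomputable def Matrix.PosSemidef.sqrt {n 𝕜 : Type*} [Fintype n] [DecidableEq n] [RCLike 𝕜]
    {A : Matrix n n 𝕜} (hA : A.PosSemidef) : Matrix n n 𝕜 :=
  hA.1.eigenvectorUnitary.1 * diagonal ((↑) ∘ Real.sqrt ∘ hA.1.eigenvalues) *
  (star hA.1.eigenvectorUnitary : Matrix n n 𝕜)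

section Sqrt

open scoped ComplexOrder

variable {n 𝕜 : Type*} [Fintype n] [DecidableEq n] [RCLike 𝕜] {A : Matrix n n 𝕜}

lemma Matrix.PosSemidef.sqrt_mul_self (hA : A.PosSemidef) : hA.sqrt * hA.sqrt = A := by
  have hU : (star hA.1.eigenvectorUnitary : Matrix n n 𝕜) * hA.1.eigenvectorUnitary.1 = 1 :=
    Unitary.coe_star_mul_self _
  have hD : diagonal ((↑) ∘ Real.sqrt ∘ hA.1.eigenvalues) *
      diagonal ((↑) ∘ Real.sqrt ∘ hA.1.eigenvalues) = diagonal ((↑) ∘ hA.1.eigenvalues : n → 𝕜) := by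
    rw [diagonal_mul_diagonal]
    congr 1
    funext i
    simp [← RCLike.ofReal_mul, Real.mul_self_sqrt (hA.eigenvalues_nonneg i)]
  conv_rhs => rw [hA.1.spectral_theorem, Unitary.conjStarAlgAut_apply, ← hD]
  simp only [Matrix.PosSemidef.sqrt, Matrix.mul_assoc]
  rw [← Matrix.mul_assoc _ hA.1.eigenvectorUnitary.1, hU, Matrix.one_mul]

lemma Matrix.PosSemidef.isHermitian_sqrt (hA : A.PosSemidef) : hA.sqrt.IsHermitian := by
  simp [Matrix.IsHermitian, Matrix.PosSemidef.sqrt, Matrix.mul_assoc, Matrix.star_eq_conjTranspose,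
    Function.comp_def, Pi.star_def]

end Sqrt

attribute [local instance] Matrix.frobeniusSeminormedAddCommGroup Matrix.frobeniusNormSMulClass

section Frobenius

lemma frobNorm_eq_norm {d : ℕ} (A : Matrix (Fin d) (Fin d) ℝ) : frobNorm A = ‖A‖ := by
  rw [frobNorm, Matrix.frobenius_norm_def, Real.sqrt_eq_rpow]
  simp [Real.norm_eq_abs, sq_abs]

lemma Matrix.frobenius_norm_sq_eq_trace_mul_transpose {m n : Type*} [Fintype m] [Fintype n]
    (A : Matrix m n ℝ) : ‖A‖ ^ 2 = (A * Aᵀ).trace := by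
  rw [Matrix.frobenius_norm_def, ← Real.sqrt_eq_rpow, Real.sq_sqrt (by positivity)]
  simp [Matrix.trace, Matrix.mul_apply, sq]

variable {n : Type*} [Fintype n]

lemma trace_mul_mul_transpose_eq_frobenius_norm_sq {S Γ : Matrix n n ℝ} (hSt : Sᵀ = S)
    (hSS : S * S = Γ) (A : Matrix n n ℝ) : (Γ * A * Aᵀ).trace = ‖S * A‖ ^ 2 := by
  rw [Matrix.frobenius_norm_sq_eq_trace_mul_transpose, Matrix.transpose_mul, hSt, ← hSS,
    Matrix.trace_mul_cycle', Matrix.mul_assoc, Matrix.mul_assoc, Matrix.mul_assoc]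

lemma frobenius_norm_mul_le_of_isUnit_det [DecidableEq n] (S A : Matrix n n ℝ) {Γ : Matrix n n ℝ}
    (hΓ : IsUnit Γ.det) : ‖S * A‖ ≤ ‖S‖ * ‖Γ⁻¹‖ * ‖A * Γ‖ := by
  have hSA : S * A = S * (A * Γ) * Γ⁻¹ := by
    rw [Matrix.mul_assoc, Matrix.mul_assoc, Matrix.mul_nonsing_inv _ hΓ, Matrix.mul_one]
  calc ‖S * A‖ ≤ ‖S‖ * ‖A * Γ‖ * ‖Γ⁻¹‖ := by
        rw [hSA]
        grw [Matrix.frobenius_norm_mul, Matrix.frobenius_norm_mul]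
    _ = ‖S‖ * ‖Γ⁻¹‖ * ‖A * Γ‖ := by ring

end Frobenius

section Loss

variable {n : Type*} [Fintype n] [DecidableEq n] {Γ Sg : Matrix n n ℝ}

noncomputable def lsaLoss (Γ Sg U : Matrix n n ℝ) (u : ℝ) : ℝ :=
  (1/2) * u^2 * (Γ * U * Uᵀ).trace - u * (U * Sg).trace

lemma lsaLoss_sub_eq (hΓ : Γᵀ = Γ) (hΓu : IsUnit Γ.det) (hSgt : Sgᵀ = Sg)
    (U : Matrix n n ℝ) (u : ℝ) :
    lsaLoss Γ Sg U u - (-(1/2) * (Γ⁻¹ * Sg * Sg).trace)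
      = (1/2) * (Γ * (u • U - Γ⁻¹ * Sg) * (u • U - Γ⁻¹ * Sg)ᵀ).trace := by
  have hΓA : Γ * (u • U - Γ⁻¹ * Sg) = u • (Γ * U) - Sg := by
    rw [Matrix.mul_sub, Matrix.mul_smul, ← Matrix.mul_assoc, Matrix.mul_nonsing_inv _ hΓu,
      Matrix.one_mul]
  have hAt : (u • U - Γ⁻¹ * Sg)ᵀ = u • Uᵀ - Sg * Γ⁻¹ := by
    rw [Matrix.transpose_sub, Matrix.transpose_smul, Matrix.transpose_mul, hSgt,
      Matrix.transpose_nonsing_inv, hΓ]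
  have hcross₁ : (Γ * U * (Sg * Γ⁻¹)).trace = (U * Sg).trace := by
    rw [← Matrix.mul_assoc, Matrix.trace_mul_comm, ← Matrix.mul_assoc, ← Matrix.mul_assoc,
      Matrix.nonsing_inv_mul _ hΓu, Matrix.one_mul]
  have hcross₂ : (Sg * Uᵀ).trace = (U * Sg).trace := by
    rw [← Matrix.trace_transpose, Matrix.transpose_mul, Matrix.transpose_transpose, hSgt]
  have hconst : (Sg * (Sg * Γ⁻¹)).trace = (Γ⁻¹ * Sg * Sg).trace := by
    rw [← Matrix.mul_assoc, Matrix.trace_mul_comm, Matrix.mul_assoc]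
  rw [Matrix.mul_assoc Γ, ← Matrix.mul_assoc Γ (u • U - Γ⁻¹ * Sg), hΓA, hAt]
  simp only [Matrix.sub_mul, Matrix.mul_sub, Matrix.smul_mul, Matrix.mul_smul, Matrix.trace_sub,
    Matrix.trace_smul, smul_eq_mul, hcross₁, hcross₂, hconst, lsaLoss]
  ring

lemma lsaLoss_sub_le {S : Matrix n n ℝ} (hSt : Sᵀ = S) (hSS : S * S = Γ) (hΓu : IsUnit Γ.det)
    (hSgt : Sgᵀ = Sg) (U : Matrix n n ℝ) (u : ℝ) :
    lsaLoss Γ Sg U u - (-(1/2) * (Γ⁻¹ * Sg * Sg).trace)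
      ≤ (1/2) * ‖S‖^2 * ‖Γ⁻¹‖^2 * ‖(u • U - Γ⁻¹ * Sg) * Γ‖^2 := by
  have hΓ : Γᵀ = Γ := by rw [← hSS, Matrix.transpose_mul, hSt]
  calc lsaLoss Γ Sg U u - (-(1/2) * (Γ⁻¹ * Sg * Sg).trace)
      = 1/2 * ‖S * (u • U - Γ⁻¹ * Sg)‖^2 := by
        rw [lsaLoss_sub_eq hΓ hΓu hSgt, trace_mul_mul_transpose_eq_frobenius_norm_sq hSt hSS]
    _ ≤ 1/2 * (‖S‖ * ‖Γ⁻¹‖ * ‖(u • U - Γ⁻¹ * Sg) * Γ‖)^2 := by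
        gcongr
        exact frobenius_norm_mul_le_of_isUnit_det S _ hΓu
    _ = 1/2 * ‖S‖^2 * ‖Γ⁻¹‖^2 * ‖(u • U - Γ⁻¹ * Sg) * Γ‖^2 := by ring

lemma frobenius_norm_sq_grad_eq (hΓu : IsUnit Γ.det) (hcomm : Γ * Sg = Sg * Γ)
    (U : Matrix n n ℝ) (u : ℝ) :
    ‖u^2 • (U * Γ) - u • Sg‖^2 = u^2 * ‖(u • U - Γ⁻¹ * Sg) * Γ‖^2 := by
  have hres : (u • U - Γ⁻¹ * Sg) * Γ = u • (U * Γ) - Sg := by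
    rw [Matrix.sub_mul, Matrix.smul_mul, Matrix.mul_assoc, ← hcomm, ← Matrix.mul_assoc,
      Matrix.nonsing_inv_mul _ hΓu, Matrix.one_mul]
  have hgrad : u^2 • (U * Γ) - u • Sg = u • (u • (U * Γ) - Sg) := by
    rw [smul_sub, smul_smul, sq]
  rw [hgrad, hres, norm_smul, Real.norm_eq_abs, mul_pow, sq_abs]

end Loss

lemma polyak_lojasiewicz_of_error_bounds {gap err grad a b c u : ℝ} (hc : 0 ≤ c)
    (hcu : c ≤ u^2) (herr : 0 ≤ err) (hgap : gap ≤ 1/2 * a^2 * b^2 * err)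
    (hgrad : u^2 * err ≤ grad) : 2 * c / (a^2 * b^2) * gap ≤ grad := by
  calc 2 * c / (a^2 * b^2) * gap ≤ 2 * c / (a^2 * b^2) * (1/2 * a^2 * b^2 * err) := by gcongr
    _ = c * err * ((a^2 * b^2) / (a^2 * b^2)) := by ring
    -- `(a²b²)/(a²b²) ≤ 1` also when `a²b² = 0`, where Lean's division gives `0`
    _ ≤ c * err := mul_le_of_le_one_right (by positivity) (div_self_le_one _)
    _ ≤ u^2 * err := by gcongr
    _ ≤ grad := hgrad

/-- PL inequality for the simplified population loss
`ℓ(U,u) = ½u² tr(ΓUUᵀ) − u tr(UΣ)` with gradient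
`(∂ℓ/∂U, ∂ℓ/∂u) = (u²UΓ − uΣ, u tr(ΓUUᵀ) − tr(UΣ))`:
(a) `‖∇ℓ‖² ≥ u²‖(uU − Γ⁻¹Σ)Γ‖_F²`;
(b) `ℓ − min ℓ ≤ ½‖Γ^{1/2}‖_F²‖Γ⁻¹‖_F²‖(uU − Γ⁻¹Σ)Γ‖_F²`;
(c) if `u² ≥ c > 0` then `‖∇ℓ‖² ≥ μ(ℓ − min ℓ)` with
`μ = 2c/(‖Γ^{1/2}‖_F²‖Γ⁻¹‖_F²)`. -/
theorem lsa_loss_PL (d : ℕ) (Γ Sg : Matrix (Fin d) (Fin d) ℝ)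
    (hΓ : Γ.PosDef) (hS : Sg.PosSemidef) (hcomm : Γ * Sg = Sg * Γ) (c : ℝ) (hc : 0 < c) :
    (∀ (U : Matrix (Fin d) (Fin d) ℝ) (u : ℝ),
      u^2 * (frobNorm ((u • U - Γ⁻¹ * Sg) * Γ))^2
      ≤ (frobNorm (u^2 • (U * Γ) - u • Sg))^2
          + (u * (Γ * U * Uᵀ).trace - (U * Sg).trace)^2) ∧
    (∀ (U : Matrix (Fin d) (Fin d) ℝ) (u : ℝ),
      ((1/2) * u^2 * (Γ * U * Uᵀ).trace - u * (U * Sg).trace)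
          - (-(1/2) * (Γ⁻¹ * Sg * Sg).trace)
      ≤ (1/2) * (frobNorm hΓ.posSemidef.sqrt)^2 * (frobNorm (Γ⁻¹))^2 *
          (frobNorm ((u • U - Γ⁻¹ * Sg) * Γ))^2) ∧
    (∀ (U : Matrix (Fin d) (Fin d) ℝ) (u : ℝ), c ≤ u^2 →
      (2 * c / ((frobNorm hΓ.posSemidef.sqrt)^2 * (frobNorm (Γ⁻¹))^2)) *
          (((1/2) * u^2 * (Γ * U * Uᵀ).trace - u * (U * Sg).trace)
            - (-(1/2) * (Γ⁻¹ * Sg * Sg).trace))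
      ≤ (frobNorm (u^2 • (U * Γ) - u • Sg))^2
          + (u * (Γ * U * Uᵀ).trace - (U * Sg).trace)^2) := by
  have hΓu : IsUnit Γ.det := (Matrix.isUnit_iff_isUnit_det Γ).mp hΓ.isUnit
  have hSgt : Sgᵀ = Sg := (Matrix.isHermitian_iff_isSymm.mp hS.isHermitian).eq
  have hsqrt : hΓ.posSemidef.sqrtᵀ = hΓ.posSemidef.sqrt :=
    (Matrix.isHermitian_iff_isSymm.mp hΓ.posSemidef.isHermitian_sqrt).eq
  simp only [frobNorm_eq_norm]
  have grad_bound (U : Matrix (Fin d) (Fin d) ℝ) (u : ℝ) :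
      u^2 * ‖(u • U - Γ⁻¹ * Sg) * Γ‖^2
        ≤ ‖u^2 • (U * Γ) - u • Sg‖^2 + (u * (Γ * U * Uᵀ).trace - (U * Sg).trace)^2 := by
    rw [frobenius_norm_sq_grad_eq hΓu hcomm]
    exact le_add_of_nonneg_right (sq_nonneg _)
  have gap_bound := lsaLoss_sub_le hsqrt hΓ.posSemidef.sqrt_mul_self hΓu hSgt
  exact ⟨grad_bound, gap_bound, fun U u hu =>
    polyak_lojasiewicz_of_error_bounds hc.le hu (by positivity) (gap_bound U u) (grad_bound U u)⟩
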